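/- For every n ≥ 1, I(W_n,x) = I(W̃_n,x)·(1+x)^{⌊n/2⌋}, where W_n is the n-centipede and W̃_n is the graph obtained from a path on n vertices by attaching a triangle to every edge between vertices 2k+1 and 2k+2 (and, if n is odd, a pendant edge at the last vertex). -/
import Mathlib

open Polynomial

noncomputable def indepPoly {V : Type*} [Finite V] (G : SimpleGraph V) : Polynomial ℝ :=
  haveI := Fintype.ofFinite V
  haveI := Classical.decPred fun s : Finset V => ∀ u ∈ s, ∀ v ∈ s, ¬G.Adj u v
  ∑ s ∈ Finset.univ.filter (fun s : Finset V => ∀ u ∈ s, ∀ v ∈ s, ¬G.Adj u v), X ^ s.card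

/-- The `n`-centipede: a path on `n` vertices `(i, false)` with a pendant vertex
`(i, true)` attached to each path vertex. -/
def centipede (n : ℕ) : SimpleGraph (Fin n × Bool) :=
  SimpleGraph.fromRel (fun a b =>
    (a.2 = false ∧ b.2 = false ∧ (a.1 : ℕ) + 1 = (b.1 : ℕ)) ∨
    (a.1 = b.1 ∧ a.2 = false ∧ b.2 = true))

/-- The graph `W̃ₙ`: a path on `n` vertices (the `inl` vertices) where a triangle vertex
`inr k` is attached to the edge between path vertices `2k` and `2k + 1` (0-indexed);
if `n` is odd, the last extra vertex is a pendant vertex attached to the last path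
vertex. -/
def tildeW (n : ℕ) : SimpleGraph (Fin n ⊕ Fin ((n + 1) / 2)) :=
  SimpleGraph.fromRel (fun a b =>
    match a, b with
    | Sum.inl i, Sum.inl j => (i : ℕ) + 1 = (j : ℕ)
    | Sum.inr k, Sum.inl i => (i : ℕ) = 2 * (k : ℕ) ∨ (i : ℕ) = 2 * (k : ℕ) + 1
    | _, _ => False)

namespace CentAux

lemma indepPoly_eq_sum {V : Type} [Fintype V] (G : SimpleGraph V) :
    indepPoly G = ∑ s ∈ @Finset.filter _ (fun s : Finset V => ∀ u ∈ s, ∀ v ∈ s, ¬G.Adj u v)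
      (Classical.decPred _) Finset.univ, X ^ s.card := by
  rw [indepPoly]
  apply Finset.sum_congr
  · ext t; simp [Finset.mem_filter]
  · intros; rfl

lemma fin_cast_mem {N : ℕ} {a b : ℕ} (ha : a < N) (hb : b < N) (hab : a = b)
    (P : Fin N → Prop) (h : P ⟨a, ha⟩) : P ⟨b, hb⟩ := by subst hab; exact h

lemma exists_val_eq {N : ℕ} {a : ℕ} (ha : a < N) (P : Fin N → Prop) :
    P ⟨a, ha⟩ ↔ ∃ j : Fin N, (j : ℕ) = a ∧ P j := by
  constructor
  · intro h; exact ⟨⟨a, ha⟩, rfl, h⟩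
  · rintro ⟨j, rfl, h⟩; rwa [Fin.eta]

variable (n : ℕ)

noncomputable def phi1 (s : Finset (Fin n × Bool)) : Finset (Fin n ⊕ Fin ((n + 1) / 2)) :=
  @Finset.filter _ (fun v => match v with
    | Sum.inl i => (i, false) ∈ s
    | Sum.inr k => ((⟨2 * (k : ℕ), by have := k.2; omega⟩ : Fin n), true) ∈ s ∧
        ∀ h : 2 * (k : ℕ) + 1 < n, ((⟨2 * (k : ℕ) + 1, h⟩ : Fin n), false) ∉ s)
    (Classical.decPred _) Finset.univ

noncomputable def phi2 (s : Finset (Fin n × Bool)) : Finset (Fin (n / 2)) :=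
  @Finset.filter _ (fun k =>
      ((⟨2 * (k : ℕ) + 1, by have := k.2; omega⟩ : Fin n), true) ∈ s ∨
      (((⟨2 * (k : ℕ) + 1, by have := k.2; omega⟩ : Fin n), false) ∈ s ∧
       ((⟨2 * (k : ℕ), by have := k.2; omega⟩ : Fin n), true) ∈ s))
    (Classical.decPred _) Finset.univ

noncomputable def psi (s' : Finset (Fin n ⊕ Fin ((n + 1) / 2))) (T : Finset (Fin (n / 2))) :
    Finset (Fin n × Bool) :=
  @Finset.filter _ (fun v => match v with
    | (i, false) => Sum.inl i ∈ s'
    | (i, true) =>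
      if (i : ℕ) % 2 = 0 then
        Sum.inr (⟨(i : ℕ) / 2, by have := i.2; omega⟩ : Fin ((n + 1) / 2)) ∈ s' ∨
        ((∃ hlt : (i : ℕ) + 1 < n, Sum.inl (⟨(i : ℕ) + 1, hlt⟩ : Fin n) ∈ s') ∧
          ∃ hk : (i : ℕ) / 2 < n / 2, (⟨(i : ℕ) / 2, hk⟩ : Fin (n / 2)) ∈ T)
      else
        (∃ hk : (i : ℕ) / 2 < n / 2, (⟨(i : ℕ) / 2, hk⟩ : Fin (n / 2)) ∈ T) ∧ Sum.inl i ∉ s')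
    (Classical.decPred _) Finset.univ

variable {n}

lemma mem_phi1_inl {s : Finset (Fin n × Bool)} {i : Fin n} :
    Sum.inl i ∈ phi1 n s ↔ (i, false) ∈ s := by
  simp [phi1]

lemma mem_phi1_inr {s : Finset (Fin n × Bool)} {k : Fin ((n + 1) / 2)} :
    Sum.inr k ∈ phi1 n s ↔
      ((⟨2 * (k : ℕ), by have := k.2; omega⟩ : Fin n), true) ∈ s ∧
        ∀ h : 2 * (k : ℕ) + 1 < n, ((⟨2 * (k : ℕ) + 1, h⟩ : Fin n), false) ∉ s := by
  simp [phi1]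

lemma mem_phi2 {s : Finset (Fin n × Bool)} {k : Fin (n / 2)} :
    k ∈ phi2 n s ↔
      ((⟨2 * (k : ℕ) + 1, by have := k.2; omega⟩ : Fin n), true) ∈ s ∨
      (((⟨2 * (k : ℕ) + 1, by have := k.2; omega⟩ : Fin n), false) ∈ s ∧
       ((⟨2 * (k : ℕ), by have := k.2; omega⟩ : Fin n), true) ∈ s) := by
  simp [phi2]

lemma mem_psi_false {s' T} {i : Fin n} :
    (i, false) ∈ psi n s' T ↔ Sum.inl i ∈ s' := by
  simp [psi]

lemma mem_psi_true {s' T} {i : Fin n} :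
    (i, true) ∈ psi n s' T ↔
      if (i : ℕ) % 2 = 0 then
        Sum.inr (⟨(i : ℕ) / 2, by have := i.2; omega⟩ : Fin ((n + 1) / 2)) ∈ s' ∨
        ((∃ hlt : (i : ℕ) + 1 < n, Sum.inl (⟨(i : ℕ) + 1, hlt⟩ : Fin n) ∈ s') ∧
          ∃ hk : (i : ℕ) / 2 < n / 2, (⟨(i : ℕ) / 2, hk⟩ : Fin (n / 2)) ∈ T)
      else
        (∃ hk : (i : ℕ) / 2 < n / 2, (⟨(i : ℕ) / 2, hk⟩ : Fin (n / 2)) ∈ T) ∧ Sum.inl i ∉ s' := by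
  simp [psi]

lemma cent_adj_path {i j : Fin n} (h : (i : ℕ) + 1 = j) :
    (centipede n).Adj (i, false) (j, false) := by
  rw [centipede, SimpleGraph.fromRel_adj]
  exact ⟨by intro he; rw [Prod.mk.injEq] at he; have := congrArg Fin.val he.1; omega,
    Or.inl (Or.inl ⟨rfl, rfl, h⟩)⟩

lemma cent_adj_pendant (i : Fin n) :
    (centipede n).Adj (i, false) (i, true) := by
  rw [centipede, SimpleGraph.fromRel_adj]
  exact ⟨by simp, Or.inl (Or.inr ⟨rfl, rfl, rfl⟩)⟩

lemma tilde_adj_path {i j : Fin n} (h : (i : ℕ) + 1 = j) :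
    (tildeW n).Adj (Sum.inl i) (Sum.inl j) := by
  rw [tildeW, SimpleGraph.fromRel_adj]
  exact ⟨by intro he; rw [Sum.inl.injEq] at he; have := congrArg Fin.val he; omega,
    Or.inl h⟩

lemma tilde_adj_tri {k : Fin ((n + 1) / 2)} {i : Fin n}
    (h : (i : ℕ) = 2 * (k : ℕ) ∨ (i : ℕ) = 2 * (k : ℕ) + 1) :
    (tildeW n).Adj (Sum.inr k) (Sum.inl i) := by
  rw [tildeW, SimpleGraph.fromRel_adj]
  exact ⟨by simp, Or.inl h⟩

lemma cent_adj_cases {u v : Fin n × Bool} (h : (centipede n).Adj u v) :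
    (u.2 = false ∧ v.2 = false ∧ ((u.1 : ℕ) + 1 = v.1 ∨ (v.1 : ℕ) + 1 = u.1)) ∨
    (u.1 = v.1 ∧ ((u.2 = false ∧ v.2 = true) ∨ (u.2 = true ∧ v.2 = false))) := by
  rw [centipede, SimpleGraph.fromRel_adj] at h
  obtain ⟨-, h | h⟩ := h
  · rcases h with ⟨h1, h2, h3⟩ | ⟨h1, h2, h3⟩
    · exact Or.inl ⟨h1, h2, Or.inl h3⟩
    · exact Or.inr ⟨h1, Or.inl ⟨h2, h3⟩⟩
  · rcases h with ⟨h1, h2, h3⟩ | ⟨h1, h2, h3⟩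
    · exact Or.inl ⟨h2, h1, Or.inr h3⟩
    · exact Or.inr ⟨h1.symm, Or.inr ⟨h3, h2⟩⟩

lemma tilde_adj_cases {u v : Fin n ⊕ Fin ((n + 1) / 2)} (h : (tildeW n).Adj u v) :
    (∃ i j : Fin n, u = Sum.inl i ∧ v = Sum.inl j ∧ ((i : ℕ) + 1 = j ∨ (j : ℕ) + 1 = i)) ∨
    (∃ (k : Fin ((n + 1) / 2)) (i : Fin n),
      ((u = Sum.inr k ∧ v = Sum.inl i) ∨ (u = Sum.inl i ∧ v = Sum.inr k)) ∧
      ((i : ℕ) = 2 * (k : ℕ) ∨ (i : ℕ) = 2 * (k : ℕ) + 1)) := by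
  rw [tildeW, SimpleGraph.fromRel_adj] at h
  obtain ⟨-, h⟩ := h
  rcases u with i | k <;> rcases v with j | l
  · exact Or.inl ⟨i, j, rfl, rfl, h⟩
  · rcases h with h | h
    · exact h.elim
    · exact Or.inr ⟨l, i, Or.inr ⟨rfl, rfl⟩, h⟩
  · rcases h with h | h
    · exact Or.inr ⟨k, j, Or.inl ⟨rfl, rfl⟩, h⟩
    · exact h.elim
  · rcases h with h | h <;> exact h.elim

section Main

variable {s : Finset (Fin n × Bool)} {s' : Finset (Fin n ⊕ Fin ((n + 1) / 2))}
  {T : Finset (Fin (n / 2))}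

lemma phi1_indep (hs : ∀ u ∈ s, ∀ v ∈ s, ¬(centipede n).Adj u v) :
    ∀ u ∈ phi1 n s, ∀ v ∈ phi1 n s, ¬(tildeW n).Adj u v := by
  intro u hu v hv hadj
  rcases tilde_adj_cases hadj with ⟨i, j, rfl, rfl, hij⟩ | ⟨k, i, hc, hki⟩
  · rw [mem_phi1_inl] at hu hv
    rcases hij with h | h
    · exact hs _ hu _ hv (cent_adj_path h)
    · exact hs _ hv _ hu (cent_adj_path h)
  · have hmem : Sum.inr k ∈ phi1 n s ∧ Sum.inl i ∈ phi1 n s := by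
      rcases hc with ⟨rfl, rfl⟩ | ⟨rfl, rfl⟩
      · exact ⟨hu, hv⟩
      · exact ⟨hv, hu⟩
    obtain ⟨h1, h2⟩ := mem_phi1_inr.1 hmem.1
    have hi' : (i, false) ∈ s := mem_phi1_inl.1 hmem.2
    have hk2 := k.isLt
    have hi2 := i.isLt
    rcases hki with h | h
    · have h1' : (i, true) ∈ s := by
        have := fin_cast_mem (a := 2 * (k : ℕ)) (by omega) i.isLt (by omega)
          (fun j => (j, true) ∈ s) h1
        rwa [Fin.eta] at this
      exact hs _ hi' _ h1' (cent_adj_pendant i)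
    · refine h2 (by omega) ?_
      have := fin_cast_mem i.isLt (show 2 * (k : ℕ) + 1 < n by omega) (by omega)
        (fun j => (j, false) ∈ s) (by rwa [Fin.eta])
      exact this

lemma not_mem_of_tilde {u v} (hs' : ∀ u ∈ s', ∀ v ∈ s', ¬(tildeW n).Adj u v)
    (h : (tildeW n).Adj u v) (hu : u ∈ s') : v ∉ s' := fun hv => hs' u hu v hv h

lemma psi_pendant_mem (hs' : ∀ u ∈ s', ∀ v ∈ s', ¬(tildeW n).Adj u v)
    {i : Fin n} (hu : (i, false) ∈ psi n s' T) (hv : (i, true) ∈ psi n s' T) : False := by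
  rw [mem_psi_false] at hu
  rw [mem_psi_true] at hv
  have hi2 := i.isLt
  split_ifs at hv with hpar
  · rcases hv with hv | ⟨⟨hlt, hmem⟩, -⟩
    · exact hs' _ hv _ hu (tilde_adj_tri (Or.inl (by simp; omega)))
    · exact hs' _ hu _ hmem (tilde_adj_path rfl)
  · exact hv.2 hu

lemma psi_indep (hs' : ∀ u ∈ s', ∀ v ∈ s', ¬(tildeW n).Adj u v) :
    ∀ u ∈ psi n s' T, ∀ v ∈ psi n s' T, ¬(centipede n).Adj u v := by
  rintro ⟨i, bi⟩ hu ⟨j, bj⟩ hv hadj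
  rcases cent_adj_cases hadj with ⟨h1, h2, h3⟩ | ⟨h1, h2⟩
  · simp only at h1 h2 h3
    subst h1; subst h2
    rw [mem_psi_false] at hu hv
    rcases h3 with h | h
    · exact hs' _ hu _ hv (tilde_adj_path h)
    · exact hs' _ hv _ hu (tilde_adj_path h)
  · simp only at h1
    subst h1
    rcases h2 with ⟨h2, h3⟩ | ⟨h2, h3⟩ <;> simp only at h2 h3 <;> subst h2 <;> subst h3
    · exact psi_pendant_mem hs' hu hv
    · exact psi_pendant_mem hs' hv hu

lemma psi_phi (hs : ∀ u ∈ s, ∀ v ∈ s, ¬(centipede n).Adj u v) :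
    psi n (phi1 n s) (phi2 n s) = s := by
  have C2 : ∀ i : Fin n, (i, false) ∈ s → (i, true) ∈ s → False :=
    fun i h h' => hs _ h _ h' (cent_adj_pendant i)
  ext ⟨i, b⟩
  have hi2 := i.isLt
  cases b
  · rw [mem_psi_false, mem_phi1_inl]
  · rw [mem_psi_true]
    split_ifs with hpar
    · rw [mem_phi1_inr]
      constructor
      · rintro (⟨h1, h2⟩ | ⟨⟨hlt, hmem⟩, ⟨hk, hT⟩⟩)
        · have := fin_cast_mem (a := 2 * ((⟨(i : ℕ) / 2, by omega⟩ : Fin ((n+1)/2)) : ℕ))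
            (by (try dsimp only); omega) i.isLt (by (try dsimp only); omega) (fun j => (j, true) ∈ s) h1
          rwa [Fin.eta] at this
        · rw [mem_phi1_inl] at hmem
          rw [mem_phi2] at hT
          dsimp only at hmem hT hlt
          rcases hT with hT | ⟨hT1, hT2⟩
          · exfalso
            refine C2 ⟨(i : ℕ) + 1, hlt⟩ hmem ?_
            exact fin_cast_mem (a := 2 * ((i : ℕ) / 2) + 1) (by omega) hlt (by omega)
              (fun j => (j, true) ∈ s) hT
          · have := fin_cast_mem (a := 2 * ((i : ℕ) / 2)) (by omega) i.isLt (by omega)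
              (fun j => (j, true) ∈ s) hT2
            rwa [Fin.eta] at this
      · intro h
        by_cases hb : ∃ hlt : (i : ℕ) + 1 < n, ((⟨(i : ℕ) + 1, hlt⟩ : Fin n), false) ∈ s
        · obtain ⟨hlt, hb⟩ := hb
          refine Or.inr ⟨⟨hlt, mem_phi1_inl.2 hb⟩, ⟨by omega, ?_⟩⟩
          rw [mem_phi2]
          dsimp only
          refine Or.inr ⟨?_, ?_⟩
          · exact fin_cast_mem (a := (i : ℕ) + 1) hlt (by omega) (by omega)
              (fun j => (j, false) ∈ s) hb
          · exact fin_cast_mem (a := (i : ℕ)) i.isLt (by omega) (by omega)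
              (fun j => (j, true) ∈ s) (by rwa [Fin.eta])
        · refine Or.inl ⟨?_, ?_⟩
          · exact fin_cast_mem (a := (i : ℕ)) i.isLt (by (try dsimp only); omega)
              (by (try dsimp only); omega) (fun j => (j, true) ∈ s) (by rwa [Fin.eta])
          · intro hlt' hc
            dsimp only at hlt' hc
            exact hb ⟨by omega, fin_cast_mem (a := 2 * ((i : ℕ) / 2) + 1) (by omega)
              (by omega) (by omega) (fun j => (j, false) ∈ s) hc⟩
    · rw [mem_phi1_inl]
      constructor
      · rintro ⟨⟨hk, hT⟩, hni⟩
        rw [mem_phi2] at hT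
        dsimp only at hT
        rcases hT with hT | ⟨hT1, hT2⟩
        · have := fin_cast_mem (a := 2 * ((i : ℕ) / 2) + 1) (by omega) i.isLt (by omega)
            (fun j => (j, true) ∈ s) hT
          rwa [Fin.eta] at this
        · exfalso
          apply hni
          have := fin_cast_mem (a := 2 * ((i : ℕ) / 2) + 1) (by omega) i.isLt (by omega)
            (fun j => (j, false) ∈ s) hT1
          rwa [Fin.eta] at this
      · intro h
        have hnf : (i, false) ∉ s := fun hc => C2 i hc h
        refine ⟨⟨by omega, ?_⟩, hnf⟩
        rw [mem_phi2]
        dsimp only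
        exact Or.inl (fin_cast_mem (a := (i : ℕ)) i.isLt (by omega) (by omega)
          (fun j => (j, true) ∈ s) (by rwa [Fin.eta]))

lemma phi1_psi (hs' : ∀ u ∈ s', ∀ v ∈ s', ¬(tildeW n).Adj u v) :
    phi1 n (psi n s' T) = s' := by
  ext v
  rcases v with i | k
  · rw [mem_phi1_inl, mem_psi_false]
  · have hk2 := k.isLt
    rw [mem_phi1_inr]
    constructor
    · rintro ⟨h1, h2⟩
      rw [mem_psi_true] at h1
      split_ifs at h1 with hpar
      · rcases h1 with h1 | ⟨⟨hlt, hmem⟩, -⟩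
        · have := fin_cast_mem (a := 2 * (k : ℕ) / 2) (by dsimp only at h1 ⊢; omega)
            k.isLt (by omega) (fun j => Sum.inr j ∈ s') h1
          rwa [Fin.eta] at this
        · exact absurd (mem_psi_false.2 hmem) (h2 hlt)
      · exact (hpar (by (try dsimp only); omega)).elim
    · intro hk
      refine ⟨?_, ?_⟩
      · rw [mem_psi_true]
        split_ifs with hpar
        · exact Or.inl (fin_cast_mem (a := (k : ℕ)) k.isLt (by (try dsimp only); omega)
            (by (try dsimp only); omega) (fun j => Sum.inr j ∈ s') (by rwa [Fin.eta]))
        · exact (hpar (by (try dsimp only); omega)).elim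
      · intro hlt hc
        rw [mem_psi_false] at hc
        exact hs' _ hk _ hc (tilde_adj_tri (Or.inr rfl))

lemma phi2_psi (hs' : ∀ u ∈ s', ∀ v ∈ s', ¬(tildeW n).Adj u v) :
    phi2 n (psi n s' T) = T := by
  ext k
  have hk2 := k.isLt
  rw [mem_phi2]
  constructor
  · rintro (hA | ⟨hB, hC⟩)
    · rw [mem_psi_true] at hA
      split_ifs at hA with hpar
      · exact absurd hpar (by (try dsimp only); omega)
      · obtain ⟨⟨hk', hT⟩, -⟩ := hA
        have := fin_cast_mem (a := (2 * (k : ℕ) + 1) / 2) (by dsimp only at hT ⊢; omega)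
          k.isLt (by omega) (fun j => j ∈ T) hT
        rwa [Fin.eta] at this
    · rw [mem_psi_false] at hB
      rw [mem_psi_true] at hC
      split_ifs at hC with hpar
      · rcases hC with hC | ⟨-, ⟨hk', hT⟩⟩
        · exfalso
          refine hs' _ hC _ hB (tilde_adj_tri (Or.inr ?_))
          dsimp only
          omega
        · have := fin_cast_mem (a := 2 * (k : ℕ) / 2) (by dsimp only at hT ⊢; omega)
            k.isLt (by omega) (fun j => j ∈ T) hT
          rwa [Fin.eta] at this
      · exact (hpar (by (try dsimp only); omega)).elim
  · intro hT
    by_cases hB : Sum.inl (⟨2 * (k : ℕ) + 1, by omega⟩ : Fin n) ∈ s'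
    · refine Or.inr ⟨mem_psi_false.2 hB, ?_⟩
      rw [mem_psi_true]
      split_ifs with hpar
      · refine Or.inr ⟨⟨by dsimp only; omega, ?_⟩, ⟨by dsimp only; omega, ?_⟩⟩
        · exact hB
        · exact fin_cast_mem (a := (k : ℕ)) k.isLt (by (try dsimp only); omega)
            (by (try dsimp only); omega) (fun j => j ∈ T) (by rwa [Fin.eta])
      · exact (hpar (by (try dsimp only); omega)).elim
    · refine Or.inl ?_
      rw [mem_psi_true]
      split_ifs with hpar
      · exact absurd hpar (by (try dsimp only); omega)
      · refine ⟨⟨by dsimp only; omega, ?_⟩, ?_⟩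
        · exact fin_cast_mem (a := (k : ℕ)) k.isLt (by (try dsimp only); omega)
            (by (try dsimp only); omega) (fun j => j ∈ T) (by rwa [Fin.eta])
        · exact hB

end Main

open scoped Classical in
noncomputable def emap (s : Finset (Fin n × Bool)) (v : Fin n × Bool) :
    (Fin n ⊕ Fin ((n + 1) / 2)) ⊕ Fin (n / 2) :=
  match v with
  | (i, false) => Sum.inl (Sum.inl i)
  | (i, true) =>
    if h : (i : ℕ) % 2 = 0 then
      if h2 : ∃ hlt : (i : ℕ) + 1 < n, ((⟨(i : ℕ) + 1, hlt⟩ : Fin n), false) ∈ s then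
        Sum.inr ⟨(i : ℕ) / 2, by obtain ⟨hlt, -⟩ := h2; omega⟩
      else Sum.inl (Sum.inr ⟨(i : ℕ) / 2, by have := i.isLt; omega⟩)
    else Sum.inr ⟨(i : ℕ) / 2, by have := i.isLt; omega⟩

open scoped Classical in
noncomputable def dmap (s : Finset (Fin n × Bool))
    (w : (Fin n ⊕ Fin ((n + 1) / 2)) ⊕ Fin (n / 2)) : Fin n × Bool :=
  match w with
  | Sum.inl (Sum.inl i) => (i, false)
  | Sum.inl (Sum.inr k) => ((⟨2 * (k : ℕ), by have := k.isLt; omega⟩ : Fin n), true)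
  | Sum.inr k =>
      if ((⟨2 * (k : ℕ) + 1, by have := k.isLt; omega⟩ : Fin n), false) ∈ s
      then ((⟨2 * (k : ℕ), by have := k.isLt; omega⟩ : Fin n), true)
      else ((⟨2 * (k : ℕ) + 1, by have := k.isLt; omega⟩ : Fin n), true)

section Main2

variable {s : Finset (Fin n × Bool)}

lemma card_eq (hs : ∀ u ∈ s, ∀ v ∈ s, ¬(centipede n).Adj u v) :
    s.card = (phi1 n s).card + (phi2 n s).card := by
  have C2 : ∀ i : Fin n, (i, false) ∈ s → (i, true) ∈ s → False :=
    fun i h h' => hs _ h _ h' (cent_adj_pendant i)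
  rw [← Finset.card_disjSum]
  refine Finset.card_bij' (fun a _ => emap s a) (fun w _ => dmap s w) ?_ ?_ ?_ ?_
  · -- emap maps s into disjSum
    rintro ⟨i, b⟩ ha
    have hi2 := i.isLt
    cases b
    · simp only [emap]
      rw [Finset.inl_mem_disjSum, mem_phi1_inl]
      exact ha
    · simp only [emap]
      split_ifs with h h2
      · rw [Finset.inr_mem_disjSum, mem_phi2]
        dsimp only
        obtain ⟨hlt, hb⟩ := h2
        refine Or.inr ⟨?_, ?_⟩
        · exact fin_cast_mem (a := (i : ℕ) + 1) hlt (by omega) (by omega)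
            (fun j => (j, false) ∈ s) hb
        · exact fin_cast_mem (a := (i : ℕ)) i.isLt (by omega) (by omega)
            (fun j => (j, true) ∈ s) (by rwa [Fin.eta])
      · rw [Finset.inl_mem_disjSum, mem_phi1_inr]
        dsimp only
        refine ⟨?_, ?_⟩
        · exact fin_cast_mem (a := (i : ℕ)) i.isLt (by omega) (by omega)
            (fun j => (j, true) ∈ s) (by rwa [Fin.eta])
        · intro hlt hc
          exact h2 ⟨by omega, fin_cast_mem (a := 2 * ((i : ℕ) / 2) + 1) (by omega)
            (by omega) (by omega) (fun j => (j, false) ∈ s) hc⟩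
      · rw [Finset.inr_mem_disjSum, mem_phi2]
        dsimp only
        exact Or.inl (fin_cast_mem (a := (i : ℕ)) i.isLt (by omega) (by omega)
          (fun j => (j, true) ∈ s) (by rwa [Fin.eta]))
  · -- dmap maps disjSum into s
    rintro ((i | k) | k) hw
    · rw [Finset.inl_mem_disjSum, mem_phi1_inl] at hw
      exact hw
    · rw [Finset.inl_mem_disjSum, mem_phi1_inr] at hw
      exact hw.1
    · rw [Finset.inr_mem_disjSum, mem_phi2] at hw
      have hk2 := k.isLt
      simp only [dmap]
      split_ifs with hc
      · rcases hw with hw | ⟨h1, h2⟩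
        · exact absurd hw (fun hw => C2 _ hc hw)
        · exact h2
      · rcases hw with hw | ⟨h1, h2⟩
        · exact hw
        · exact absurd h1 hc
  · -- left inverse : dmap (emap a) = a for a ∈ s
    rintro ⟨i, b⟩ ha
    have hi2 := i.isLt
    cases b
    · rfl
    · simp only [emap]
      split_ifs with h h2
      · -- even, next path vertex in s : emap = inr ⟨i/2⟩
        simp only [dmap]
        obtain ⟨hlt, hb⟩ := h2
        split_ifs with hc
        · rw [Prod.mk.injEq]
          exact ⟨Fin.val_injective (by (try dsimp only); omega), rfl⟩
        · exfalso
          apply hc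
          exact fin_cast_mem (a := (i : ℕ) + 1) hlt (by (try dsimp only); omega)
            (by (try dsimp only); omega) (fun j => (j, false) ∈ s) hb
      · -- even, next not in s : emap = inl (inr ⟨i/2⟩)
        simp only [dmap]
        rw [Prod.mk.injEq]
        exact ⟨Fin.val_injective (by (try dsimp only); omega), rfl⟩
      · -- odd : emap = inr ⟨i/2⟩
        simp only [dmap]
        split_ifs with hc
        · exfalso
          refine C2 i ?_ ha
          have := fin_cast_mem (a := 2 * (((⟨(i : ℕ) / 2, by omega⟩ : Fin (n / 2))) : ℕ) + 1)
            (by (try dsimp only); omega) i.isLt (by (try dsimp only); omega)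
            (fun j => (j, false) ∈ s) hc
          rwa [Fin.eta] at this
        · rw [Prod.mk.injEq]
          exact ⟨Fin.val_injective (by (try dsimp only); omega), rfl⟩
  · -- right inverse : emap (dmap w) = w for w ∈ disjSum
    rintro ((i | k) | k) hw
    · rfl
    · rw [Finset.inl_mem_disjSum, mem_phi1_inr] at hw
      obtain ⟨h1, h2⟩ := hw
      have hk2 := k.isLt
      simp only [dmap, emap]
      split_ifs with h hex
      · obtain ⟨hlt, hb⟩ := hex
        exact absurd hb (h2 (by (try dsimp only at hlt ⊢); omega))
      · exact congrArg Sum.inl (congrArg Sum.inr (Fin.val_injective (by (try dsimp only); omega)))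
      · exact (h (by (try dsimp only); omega)).elim
    · rw [Finset.inr_mem_disjSum, mem_phi2] at hw
      have hk2 := k.isLt
      simp only [dmap]
      split_ifs with hc
      · -- dmap = (2k, true)
        simp only [emap]
        split_ifs with h hex
        · exact congrArg Sum.inr (Fin.val_injective (by (try dsimp only); omega))
        · exact (hex ⟨by (try dsimp only); omega, hc⟩).elim
        · exact (h (by (try dsimp only); omega)).elim
      · -- dmap = (2k+1, true)
        simp only [emap]
        split_ifs with h hex
        · exact absurd h (by (try dsimp only); omega)
        · exact absurd h (by (try dsimp only); omega)
        · exact congrArg Sum.inr (Fin.val_injective (by (try dsimp only); omega))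

end Main2

section Main3

variable {s : Finset (Fin n × Bool)} {s' : Finset (Fin n ⊕ Fin ((n + 1) / 2))}
  {T : Finset (Fin (n / 2))}

end Main3

end CentAux

theorem centipede_eq_tildeW (n : ℕ) (hn : 1 ≤ n) :
    indepPoly (centipede n) = indepPoly (tildeW n) * (1 + X) ^ (n / 2) := by
  classical
  rw [CentAux.indepPoly_eq_sum, CentAux.indepPoly_eq_sum]
  have hpow : ((1 : ℝ[X]) + X) ^ (n / 2) =
      ∑ T ∈ (Finset.univ : Finset (Fin (n / 2))).powerset, X ^ T.card := by
    rw [add_comm]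
    calc (X + 1 : ℝ[X]) ^ (n / 2)
        = ∏ _i ∈ (Finset.univ : Finset (Fin (n / 2))), (X + 1) := by
          rw [Finset.prod_const, Finset.card_univ, Fintype.card_fin]
      _ = ∑ T ∈ (Finset.univ : Finset (Fin (n / 2))).powerset,
            (∏ _i ∈ T, (X : ℝ[X])) * ∏ _i ∈ Finset.univ \ T, 1 := Finset.prod_add _ _ _
      _ = ∑ T ∈ (Finset.univ : Finset (Fin (n / 2))).powerset, X ^ T.card := by
          refine Finset.sum_congr rfl fun T hT => ?_
          simp [Finset.prod_const]
  rw [hpow, Finset.sum_mul_sum]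
  rw [← Finset.sum_product']
  refine Finset.sum_nbij' (fun s => (CentAux.phi1 n s, CentAux.phi2 n s))
    (fun p => CentAux.psi n p.1 p.2) ?_ ?_ ?_ ?_ ?_
  · intro s hs
    simp only [Finset.mem_filter, Finset.mem_univ, true_and] at hs
    simp only [Finset.mem_product, Finset.mem_filter, Finset.mem_univ, true_and,
      Finset.mem_powerset]
    exact ⟨CentAux.phi1_indep hs, Finset.subset_univ _⟩
  · intro p hp
    simp only [Finset.mem_product, Finset.mem_filter, Finset.mem_univ, true_and,
      Finset.mem_powerset] at hp
    simp only [Finset.mem_filter, Finset.mem_univ, true_and]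
    exact CentAux.psi_indep hp.1
  · intro s hs
    simp only [Finset.mem_filter, Finset.mem_univ, true_and] at hs
    exact CentAux.psi_phi hs
  · intro p hp
    simp only [Finset.mem_product, Finset.mem_filter, Finset.mem_univ, true_and,
      Finset.mem_powerset] at hp
    exact Prod.ext (CentAux.phi1_psi hp.1) (CentAux.phi2_psi hp.1)
  · intro s hs
    simp only [Finset.mem_filter, Finset.mem_univ, true_and] at hs
    rw [← pow_add, CentAux.card_eq hs]
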